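/- arXiv:nlin/0512012 — 4 statements merged into one kernel-verified Lean document; each statement's English description precedes it below -/
import Mathlib

section
/- Let y : ℝ → ℝ be three times differentiable with y'(x) > 0 for all x, and let k ∈ ℝ. If y'(x)·y'''(x) − (1/2)·(y''(x))² = k for all x, then the function w(x) = √(y'(x)) satisfies w''(x) = k / (2·w(x)³) for all x: the first integral of y⁽⁴⁾ = 0 obtained from the integrating factor y' is a variation of the Ermakov–Pinney equation in the variable (y')^{1/2}. -/
/-!
With `u = y'`, the chain rule gives `(√u)' = u' / (2√u)` and
`(√u)'' = (u u'' - ½ u'²) / (2 (√u)³)`; the numerator is exactly the first integral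
`y' y''' - ½ (y'')² = k`.
-/

open Real

section SqrtComp

variable {u : ℝ → ℝ}

theorem deriv_sqrt_comp (hu : Differentiable ℝ u) (hne : ∀ x, u x ≠ 0) :
    deriv (fun t => √(u t)) = fun t => deriv u t / (2 * √(u t)) :=
  funext fun t => ((hu t).hasDerivAt.sqrt (hne t)).deriv

theorem iteratedDeriv_two_sqrt_comp (hu : Differentiable ℝ u)
    (hu' : Differentiable ℝ (deriv u)) (hpos : ∀ x, 0 < u x) (x : ℝ) :
    iteratedDeriv 2 (fun t => √(u t)) x
      = (u x * deriv (deriv u) x - 1 / 2 * deriv u x ^ 2) / (2 * √(u x) ^ 3) := by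
  have hsqrt_pos : 0 < √(u x) := sqrt_pos.mpr (hpos x)
  have hsqrt_sq : √(u x) ^ 2 = u x := sq_sqrt (hpos x).le
  have hderiv : HasDerivAt (fun t => deriv u t / (2 * √(u t)))
      ((deriv (deriv u) x * (2 * √(u x)) - deriv u x * (2 * (deriv u x / (2 * √(u x)))))
        / (2 * √(u x)) ^ 2) x :=
    (hu' x).hasDerivAt.div
      (((hu x).hasDerivAt.sqrt (hpos x).ne').const_mul 2) (by positivity)
  rw [iteratedDeriv_succ, iteratedDeriv_one, deriv_sqrt_comp hu fun t => (hpos t).ne',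
    hderiv.deriv]
  field_simp
  rw [hsqrt_sq]

end SqrtComp

/-- If `y` is three times differentiable with `y' > 0` and satisfies the first
integral `y' y''' - ½ (y'')² = k` of `y⁽⁴⁾ = 0`, then `w = √(y')` satisfies the
Ermakov–Pinney type equation `w'' = k / (2 w³)`. -/
theorem sqrt_deriv_satisfies_ermakov_pinney
    (y : ℝ → ℝ) (hy : ∀ j < 3, Differentiable ℝ (iteratedDeriv j y))
    (hpos : ∀ x, 0 < iteratedDeriv 1 y x) (k : ℝ)
    (hI : ∀ x, iteratedDeriv 1 y x * iteratedDeriv 3 y x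
        - (1 / 2) * (iteratedDeriv 2 y x) ^ 2 = k)
    (x : ℝ) :
    iteratedDeriv 2 (fun t : ℝ => Real.sqrt (iteratedDeriv 1 y t)) x
      = k / (2 * (Real.sqrt (iteratedDeriv 1 y x)) ^ 3) := by
  have hy₁ : Differentiable ℝ (iteratedDeriv 1 y) := hy 1 (by norm_num)
  have hy₂ : Differentiable ℝ (deriv (iteratedDeriv 1 y)) := by
    simpa only [← iteratedDeriv_succ] using hy 2 (by norm_num)
  rw [iteratedDeriv_two_sqrt_comp hy₁ hy₂ hpos, ← hI x]
  simp only [← iteratedDeriv_succ]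
end

section
/- Let n ≥ 1 and let y : ℝ → ℝ be n times continuously differentiable with y⁽ⁿ⁾(x) = 0 for all x. Then for each i with 0 ≤ i ≤ n−1, the function x ↦ Σ_{j=0}^{n−i−1} (−1)ʲ · x^{n−j−i−1}/(n−j−i−1)! · y⁽ⁿ⁻ʲ⁻¹⁾(x) is constant on ℝ. (These are the fundamental first integrals I_{n,i} of the equation of maximal symmetry y⁽ⁿ⁾ = 0.) -/
/-!
Up to the sign `(-1)^(n-i-1)`, `I_{n,i}(x)` is the Taylor polynomial of order `n-i-1` of `y⁽ⁱ⁾`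
centred at `x` and evaluated at `0`. Its derivative with respect to the centre `x` is the
remainder term `(-x)^(n-i-1)/(n-i-1)! · y⁽ⁿ⁾(x)`, which vanishes.
-/

open Finset Nat

theorem iteratedDeriv_iteratedDeriv {𝕜 F : Type*} [NontriviallyNormedField 𝕜]
    [NormedAddCommGroup F] [NormedSpace 𝕜 F] (k i : ℕ) (f : 𝕜 → F) :
    iteratedDeriv k (iteratedDeriv i f) = iteratedDeriv (k + i) f := by
  simp only [iteratedDeriv_eq_iterate, Function.iterate_add_apply]

section Taylor

variable {E : Type*} [NormedAddCommGroup E] [NormedSpace ℝ E] {f : ℝ → E} {M : ℕ}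

theorem ContDiff.hasDerivAt_taylorWithinEval_univ (hf : ContDiff ℝ (M + 1) f) (x t : ℝ) :
    HasDerivAt (fun t => taylorWithinEval f M Set.univ t x)
      (((M ! : ℝ)⁻¹ * (x - t) ^ M) • iteratedDeriv (M + 1) f t) t := by
  have hdiff : DifferentiableWithinAt ℝ (iteratedDerivWithin M f Set.univ) Set.univ t := by
    rw [iteratedDerivWithin_univ]
    exact (hf.differentiable_iteratedDeriv' M t).differentiableWithinAt
  have h := hasDerivWithinAt_taylorWithinEval (x := x) uniqueDiffOn_univ Filter.univ_mem
    (Set.mem_univ t) subset_rfl (hf.of_le (by norm_cast; omega)).contDiffOn hdiff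
  rwa [iteratedDerivWithin_univ, hasDerivWithinAt_univ] at h

theorem taylorWithinEval_univ_eq_of_iteratedDeriv_eq_zero (hf : ContDiff ℝ (M + 1) f)
    (hzero : ∀ t, iteratedDeriv (M + 1) f t = 0) (x a b : ℝ) :
    taylorWithinEval f M Set.univ a x = taylorWithinEval f M Set.univ b x := by
  have h t := hf.hasDerivAt_taylorWithinEval_univ x t
  simp only [hzero, smul_zero] at h
  exact is_const_of_deriv_eq_zero (fun t => (h t).differentiableAt) (fun t => (h t).deriv) a b

end Taylor

noncomputable def firstIntegral (n i : ℕ) (y : ℝ → ℝ) (x : ℝ) : ℝ :=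
  ∑ j ∈ range (n - i), (-1) ^ j * x ^ (n - j - i - 1) / ((n - j - i - 1) ! : ℝ)
    * iteratedDeriv (n - j - 1) y x

theorem firstIntegral_of_le {n i : ℕ} (h : n ≤ i) (y : ℝ → ℝ) (x : ℝ) :
    firstIntegral n i y x = 0 := by
  simp [firstIntegral, Nat.sub_eq_zero_of_le h]

theorem firstIntegral_eq_neg_one_pow_mul_taylorWithinEval (i M : ℕ) (y : ℝ → ℝ) (x : ℝ) :
    firstIntegral (i + M + 1) i y x
      = (-1) ^ M * taylorWithinEval (iteratedDeriv i y) M Set.univ x 0 := by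
  rw [firstIntegral, taylor_within_apply, mul_sum, ← sum_range_reflect]
  refine sum_congr (by congr 1; omega) fun j hj => ?_
  have hjM : j ≤ M := Nat.lt_succ_iff.mp (mem_range.mp hj)
  have hsign : (-1 : ℝ) ^ (M - j) = (-1) ^ M * (-1) ^ j := by
    rw [← pow_add, show M + j = M - j + 2 * j by omega, pow_add, pow_mul, neg_one_sq, one_pow,
      mul_one]
  rw [show i + M + 1 - i - 1 - j = M - j by omega, show i + M + 1 - (M - j) - i - 1 = j by omega,
    show i + M + 1 - (M - j) - 1 = j + i by omega, hsign, iteratedDerivWithin_univ,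
    iteratedDeriv_iteratedDeriv, zero_sub, neg_pow, smul_eq_mul]
  ring

theorem fundamental_first_integrals_constant_general
    (n : ℕ) (y : ℝ → ℝ) (hy : ContDiff ℝ (n : ℕ∞) y)
    (hmax : ∀ x, iteratedDeriv n y x = 0)
    (i : ℕ) (a b : ℝ) :
    (∑ j ∈ Finset.range (n - i),
        (-1 : ℝ) ^ j * a ^ (n - j - i - 1) / (Nat.factorial (n - j - i - 1))
          * iteratedDeriv (n - j - 1) y a)
      = ∑ j ∈ Finset.range (n - i),
        (-1 : ℝ) ^ j * b ^ (n - j - i - 1) / (Nat.factorial (n - j - i - 1))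
          * iteratedDeriv (n - j - 1) y b := by
  show firstIntegral n i y a = firstIntegral n i y b
  rcases le_or_gt n i with hle | hin
  · rw [firstIntegral_of_le hle, firstIntegral_of_le hle]
  obtain ⟨M, rfl⟩ : ∃ M, n = i + M + 1 := ⟨n - i - 1, by omega⟩
  have hdiff : ContDiff ℝ (M + 1) (iteratedDeriv i y) := by
    rw [show i + M + 1 = M + 1 + i by omega] at hy
    rw [iteratedDeriv_eq_iterate]
    exact_mod_cast hy.iterate_deriv' (M + 1) i
  have hzero : ∀ t, iteratedDeriv (M + 1) (iteratedDeriv i y) t = 0 := by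
    simpa [iteratedDeriv_iteratedDeriv, show M + 1 + i = i + M + 1 by omega] using hmax
  rw [firstIntegral_eq_neg_one_pow_mul_taylorWithinEval,
    firstIntegral_eq_neg_one_pow_mul_taylorWithinEval,
    taylorWithinEval_univ_eq_of_iteratedDeriv_eq_zero hdiff hzero 0 a b]

/-- The fundamental first integrals `I_{n,i}` of the equation of maximal symmetry
`y⁽ⁿ⁾ = 0`: if `y` is `n` times continuously differentiable with `y⁽ⁿ⁾ ≡ 0`, then
for each `0 ≤ i ≤ n-1` the function
`x ↦ Σ_{j=0}^{n-i-1} (-1)ʲ x^{n-j-i-1}/(n-j-i-1)! · y⁽ⁿ⁻ʲ⁻¹⁾(x)` is constant. -/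
theorem fundamental_first_integrals_constant
    (n : ℕ) (hn : 1 ≤ n) (y : ℝ → ℝ) (hy : ContDiff ℝ (n : ℕ∞) y)
    (hmax : ∀ x, iteratedDeriv n y x = 0)
    (i : ℕ) (hi : i ≤ n - 1) (a b : ℝ) :
    (∑ j ∈ Finset.range (n - i),
        (-1 : ℝ) ^ j * a ^ (n - j - i - 1) / (Nat.factorial (n - j - i - 1))
          * iteratedDeriv (n - j - 1) y a)
      = ∑ j ∈ Finset.range (n - i),
        (-1 : ℝ) ^ j * b ^ (n - j - i - 1) / (Nat.factorial (n - j - i - 1))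
          * iteratedDeriv (n - j - 1) y b :=
  fundamental_first_integrals_constant_general n y hy hmax i a b
end

section
/- Define J : ℝ⁴ → ℝ by J(x, u₀, u₁, u₂) = u₀·u₂ − (1/2)·u₁², and define the prolonged sl(2,ℝ) operators of y''' = 0 acting on differentiable functions F : ℝ⁴ → ℝ by Λ₁F = ∂F/∂x, Λ₂F = x·∂F/∂x + u₀·∂F/∂u₀ − u₂·∂F/∂u₂, Λ₃F = x²·∂F/∂x + 2x·u₀·∂F/∂u₀ + 2u₀·∂F/∂u₁ + (2u₁ − 2x·u₂)·∂F/∂u₂. Then Λ₁J = 0, Λ₂J = 0 and Λ₃J = 0 identically on ℝ⁴. (The autonomous integral J = y y'' − ½ y'² obtained from the integrating factor y possesses the full sl(2,ℝ) subalgebra.) -/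
/-! The partial derivatives of `J` are `(0, u₂, -u₁, u₀)`; substituting them, each `Λᵢ J`
becomes a polynomial in `(x, u₀, u₁, u₂)` that cancels identically. -/

/-- The autonomous integral `J = y y'' - ½ y'²` of `y''' = 0`, as a function of
`(x, u₀, u₁, u₂) = (x, y, y', y'')`. -/
noncomputable def autonomousIntegralJ (x u₀ u₁ u₂ : ℝ) : ℝ := u₀ * u₂ - (1 / 2) * u₁ ^ 2

section

variable (x u₀ u₁ u₂ : ℝ)

theorem deriv_autonomousIntegralJ_x :
    deriv (fun t => autonomousIntegralJ t u₀ u₁ u₂) x = 0 :=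
  deriv_const x _

theorem deriv_autonomousIntegralJ_u₀ :
    deriv (fun s => autonomousIntegralJ x s u₁ u₂) u₀ = u₂ :=
  (((hasDerivAt_id u₀).mul_const u₂).sub_const ((1 / 2 : ℝ) * u₁ ^ 2)).congr_deriv
    (one_mul u₂) |>.deriv

theorem deriv_autonomousIntegralJ_u₁ :
    deriv (fun s => autonomousIntegralJ x u₀ s u₂) u₁ = -u₁ :=
  (((hasDerivAt_pow 2 u₁).const_mul (1 / 2 : ℝ)).const_sub (u₀ * u₂)).congr_deriv
    (by push_cast; ring) |>.deriv

theorem deriv_autonomousIntegralJ_u₂ :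
    deriv (fun s => autonomousIntegralJ x u₀ u₁ s) u₂ = u₀ :=
  (((hasDerivAt_id u₂).const_mul u₀).sub_const ((1 / 2 : ℝ) * u₁ ^ 2)).congr_deriv
    (mul_one u₀) |>.deriv

end

/-- The autonomous integral `J = y y'' - ½ y'²` is annihilated by the (prolonged)
`sl(2,ℝ)` subalgebra `Λ₁ = ∂ₓ`, `Λ₂ = x∂ₓ + u₀∂₀ - u₂∂₂`,
`Λ₃ = x²∂ₓ + 2xu₀∂₀ + 2u₀∂₁ + (2u₁ - 2xu₂)∂₂`. -/
theorem sl2_annihilates_autonomous_integral :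
    ∀ x u₀ u₁ u₂ : ℝ,
      deriv (fun t => autonomousIntegralJ t u₀ u₁ u₂) x = 0 ∧
      x * deriv (fun t => autonomousIntegralJ t u₀ u₁ u₂) x
        + u₀ * deriv (fun s => autonomousIntegralJ x s u₁ u₂) u₀
        - u₂ * deriv (fun s => autonomousIntegralJ x u₀ u₁ s) u₂ = 0 ∧
      x ^ 2 * deriv (fun t => autonomousIntegralJ t u₀ u₁ u₂) x
        + 2 * x * u₀ * deriv (fun s => autonomousIntegralJ x s u₁ u₂) u₀
        + 2 * u₀ * deriv (fun s => autonomousIntegralJ x u₀ s u₂) u₁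
        + (2 * u₁ - 2 * x * u₂) * deriv (fun s => autonomousIntegralJ x u₀ u₁ s) u₂
          = 0 := by
  intro x u₀ u₁ u₂
  rw [deriv_autonomousIntegralJ_x, deriv_autonomousIntegralJ_u₀,
    deriv_autonomousIntegralJ_u₁, deriv_autonomousIntegralJ_u₂]
  exact ⟨rfl, by ring, by ring⟩
end

section
/- Let n ≥ 1. For 0 ≤ i ≤ n−1 define F_{n,i} : ℝ × ℝⁿ → ℝ by F_{n,i}(x, u) = Σ_{j=0}^{n−i−1} (−1)ʲ · x^{n−j−i−1}/(n−j−i−1)! · u_{n−j−1}. Then for every i with 0 ≤ i ≤ n−1 and every (x,u) ∈ ℝ × ℝⁿ, x·∂F_{n,i}/∂x + Σ_{k=0}^{n−1} (1−k)·u_k·∂F_{n,i}/∂u_k = (1−i)·F_{n,i}(x,u). (This is the action Λ₂ I_{n,i} = (1−i) I_{n,i} of the prolonged symmetry Λ₂ = x∂ₓ + y∂_y on the fundamental first integrals of y⁽ⁿ⁾ = 0.) -/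
/-!
Λ₂ is a derivation assigning weight `1` to `x` and weight `1 - k` to `u_k`, so every monomial
`x^m u_p` is an eigenfunction with eigenvalue `m + 1 - p`. Every term of `I_{n,i}` has
`p = m + i`, hence eigenvalue `1 - i`, and Λ₂ is additive on such sums.
-/

open Finset

noncomputable def lambda2Action {n : ℕ} (F : ℝ → (Fin n → ℝ) → ℝ) (x : ℝ) (u : Fin n → ℝ) : ℝ :=
  x * deriv (fun t => F t u) x
    + ∑ k : Fin n, ((1 : ℝ) - (k : ℕ)) * u k * deriv (fun s => F x (Function.update u k s)) (u k)

theorem hasDerivAt_update_apply {𝕜 ι : Type*} [NontriviallyNormedField 𝕜] [Fintype ι]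
    [DecidableEq ι] (u : ι → 𝕜) (k p : ι) (y : 𝕜) :
    HasDerivAt (fun s => Function.update u k s p) (if p = k then 1 else 0) y := by
  simpa [Pi.single_apply] using hasDerivAt_pi.1 (hasDerivAt_update u k y) p

section

variable {n : ℕ} {x : ℝ} {u : Fin n → ℝ}

theorem lambda2Action_sum {ι : Type*} (s : Finset ι) (F : ι → ℝ → (Fin n → ℝ) → ℝ)
    (hx : ∀ j ∈ s, DifferentiableAt ℝ (fun t => F j t u) x)
    (hu : ∀ k, ∀ j ∈ s, DifferentiableAt ℝ (fun s => F j x (Function.update u k s)) (u k)) :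
    lambda2Action (fun t v => ∑ j ∈ s, F j t v) x u = ∑ j ∈ s, lambda2Action (F j) x u := by
  simp only [lambda2Action, deriv_fun_sum hx, deriv_fun_sum (hu _), mul_sum, sum_add_distrib]
  rw [sum_comm]

theorem lambda2Action_monomial (c : ℝ) (m : ℕ) (p : Fin n) :
    lambda2Action (fun t v => c * t ^ m * v p) x u
      = ((m : ℝ) + 1 - (p : ℕ)) * (c * x ^ m * u p) := by
  have hx : HasDerivAt (fun t => c * t ^ m * u p) (c * (m * x ^ (m - 1)) * u p) x :=
    ((hasDerivAt_pow m x).const_mul c).mul_const _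
  have hu (k : Fin n) : HasDerivAt (fun s => c * x ^ m * Function.update u k s p)
      (c * x ^ m * if p = k then 1 else 0) (u k) :=
    (hasDerivAt_update_apply u k p (u k)).const_mul _
  have euler : x * (m * x ^ (m - 1)) = m * x ^ m := by
    rcases Nat.eq_zero_or_pos m with rfl | hm
    · simp
    · rw [mul_left_comm, mul_pow_sub_one hm.ne']
  simp only [lambda2Action, hx.deriv, (hu _).deriv, mul_ite, mul_one, mul_zero,
    Fintype.sum_ite_eq]
  linear_combination c * u p * euler

end

/-- The prolonged symmetry `Λ₂ = x∂ₓ + Σₖ (1-k)uₖ∂ₖ` acts on the fundamental first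
integral `I_{n,i}` of `y⁽ⁿ⁾ = 0` as multiplication by `(1-i)`: with
`F_{n,i}(x,u) = Σ_{j=0}^{n-i-1} (-1)ʲ x^{n-j-i-1}/(n-j-i-1)! · u_{n-j-1}`,
`x·∂F/∂x + Σ_{k=0}^{n-1} (1-k)·uₖ·∂F/∂uₖ = (1-i)·F`. -/
theorem lambda2_action_on_fundamental_integral
    (n : ℕ) (hn : 1 ≤ n) (i : ℕ) (x : ℝ) (u : Fin n → ℝ) :
    (let F : ℝ → (Fin n → ℝ) → ℝ := fun t v => ∑ j ∈ Finset.range (n - i),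
        (-1 : ℝ) ^ j * t ^ (n - j - i - 1) / (Nat.factorial (n - j - i - 1))
          * v ⟨n - j - 1, by omega⟩
     x * deriv (fun t => F t u) x
        + ∑ k : Fin n, ((1 : ℝ) - (k : ℕ)) * u k
            * deriv (fun s => F x (Function.update u k s)) (u k)
      = ((1 : ℝ) - i) * F x u) := by
  intro F
  have hF : F = fun t v => ∑ j ∈ range (n - i),
      (-1 : ℝ) ^ j / (n - j - i - 1).factorial * t ^ (n - j - i - 1) * v ⟨n - j - 1, by omega⟩ := by
    funext t v
    exact sum_congr rfl fun j _ => by ring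
  show lambda2Action F x u = _
  rw [hF, lambda2Action_sum, mul_sum]
  · refine sum_congr rfl fun j hj => ?_
    have hji : ((n - j - 1 : ℕ) : ℝ) = (n - j - i - 1 : ℕ) + i := by
      rw [← Nat.cast_add]
      congr 1
      have := mem_range.1 hj
      omega
    rw [lambda2Action_monomial, Fin.val_mk, hji]
    ring
  · intro j _
    fun_prop
  · intro k j _
    exact (hasDerivAt_update_apply u k _ (u k)).differentiableAt.const_mul _
end
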